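/- arXiv:1205.2841 — 6 statements merged into one kernel-verified Lean document; each statement's English description precedes it below -/
import Mathlib

section
/- For every visibly pushdown automaton A over alphabet Σ (used as an acceptor of unranked trees via their linearizations), one can construct a hedge automaton A_H over Σ such that for all unranked trees t over Σ, the linearization [t] is accepted by A if and only if t is accepted by A_H; concretely, A_H has state set Q × Q, final states Q_i × Q_f, and rules (a, L_{s,s'}, (q,q')) for every γ ∈ Γ with q –a:γ→ s ∈ Δ and s' –ā:γ→ q' ∈ Δ, where L_{s,s'} = {(s,q_1)(q_1,q_2)⋯(q_{n-1},q_n)(q_n,s') | n ≥ 0, q_1,…,q_n ∈ Q} ∪ K_{s,s'} with K_{s,s'} = {ε} if s = s' and ∅ otherwise. -/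
/-- Unranked trees over alphabet `σ`: a root label and a list of subtrees. -/
inductive UTree (σ : Type) : Type where
  | node : σ → List (UTree σ) → UTree σ

namespace UTree

/-- Linearization of an unranked tree, over `σ ⊕ σ` where `Sum.inl a` is the
opening tag `a` and `Sum.inr a` is the closing tag `ā`. -/
def lin {σ : Type} : UTree σ → List (σ ⊕ σ)
  | .node a ts => Sum.inl a :: ((ts.attach.map fun x => lin x.1).flatten ++ [Sum.inr a])
decreasing_by simp only [UTree.node.sizeOf_spec]; have := List.sizeOf_lt_of_mem x.2; omega

/-- Height of a tree (number of nodes on the longest branch). -/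
def height {σ : Type} : UTree σ → ℕ
  | .node _ ts => ((ts.attach.map fun x => height x.1).foldr max 0) + 1
decreasing_by simp only [UTree.node.sizeOf_spec]; have := List.sizeOf_lt_of_mem x.2; omega

end UTree

/-- Linearization of a hedge (a finite sequence of trees). -/
def linH {σ : Type} (h : List (UTree σ)) : List (σ ⊕ σ) := (h.map UTree.lin).flatten

/-- `u` is a nonempty proper prefix of the linearization of some tree. -/
def ProperPrefix {σ : Type} (u : List (σ ⊕ σ)) : Prop :=
  ∃ (t : UTree σ) (v : List (σ ⊕ σ)), v ≠ [] ∧ u ++ v = t.lin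

/-- A visibly pushdown automaton over `σ` (calls `Sum.inl a`, returns `Sum.inr a`):
states `Q`, stack alphabet `Γ`, initial and final states, push rules
`q –a:γ→ q'` (for `a ∈ Σ`) and pop rules `q –ā:γ→ q'` (for `ā ∈ Σ̄`). -/
structure VPA (σ Q Γ : Type) where
  init : Set Q
  final : Set Q
  push : Q → σ → Γ → Q → Prop
  pop : Q → σ → Γ → Q → Prop

namespace VPA

/-- One step between configurations (a configuration is a pair `(q, σ) ∈ Q × Γ*`). -/
def Step {σ Q Γ : Type} (A : VPA σ Q Γ) :
    (Q × List Γ) → (σ ⊕ σ) → (Q × List Γ) → Prop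
  | c, Sum.inl a, c' => ∃ γ, A.push c.1 a γ c'.1 ∧ c'.2 = γ :: c.2
  | c, Sum.inr a, c' => ∃ γ, A.pop c.1 a γ c'.1 ∧ c.2 = γ :: c'.2

/-- Extension of `Step` to words over `σ ⊕ σ`. -/
def Steps {σ Q Γ : Type} (A : VPA σ Q Γ) :
    (Q × List Γ) → List (σ ⊕ σ) → (Q × List Γ) → Prop
  | c, [], c' => c = c'
  | c, x :: w, c'' => ∃ c', A.Step c x c' ∧ A.Steps c' w c''

/-- A word is accepted if it leads from some initial configuration `(q_i, ε)` to
some final configuration `(q_f, ε)`. -/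
def AcceptsWord {σ Q Γ : Type} (A : VPA σ Q Γ) (w : List (σ ⊕ σ)) : Prop :=
  ∃ qi ∈ A.init, ∃ qf ∈ A.final, A.Steps (qi, []) w (qf, [])

/-- A tree is accepted if its linearization is. -/
def AcceptsTree {σ Q Γ : Type} (A : VPA σ Q Γ) (t : UTree σ) : Prop :=
  A.AcceptsWord t.lin

end VPA

/-- A hedge automaton: final states and rules `(a, L, q)` with a horizontal
language `L ⊆ Q*`. -/
structure HedgeAutomaton (σ Q : Type) where
  final : Set Q
  rules : Set (σ × Set (List Q) × Q)

/-- `HEval A t q` holds iff some run of `A` on `t` labels the root of `t` by `q`. -/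
inductive HEval {σ Q : Type} (A : HedgeAutomaton σ Q) : UTree σ → Q → Prop
  | node {a : σ} {ts : List (UTree σ)} {q : Q} {L : Set (List Q)} {qs : List Q} :
      (a, L, q) ∈ A.rules → qs ∈ L → qs.length = ts.length →
      (∀ p ∈ ts.zip qs, HEval A p.1 p.2) → HEval A (UTree.node a ts) q

/-- A tree is accepted if some run labels its root by a final state. -/
def accepted {σ Q : Type} (A : HedgeAutomaton σ Q) (t : UTree σ) : Prop :=
  ∃ q ∈ A.final, HEval A t q

/-- All horizontal languages of `A` are regular. -/
def RegularHA {σ Q : Type} (A : HedgeAutomaton σ Q) : Prop :=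
  ∀ r ∈ A.rules, Language.IsRegular (r.2.1 : Language Q)

/-- The words `p₁⋯pₙ` of a macrostate word `P₁⋯Pₙ`, with `pᵢ ∈ Pᵢ` for all `i`. -/
def wordsOf {Q : Type} (π : List (Set Q)) : Set (List Q) :=
  {w | List.Forall₂ (· ∈ ·) w π}

/-- `Post_a(π)` for a macrostate word `π`. -/
def postA {σ Q : Type} (A : HedgeAutomaton σ Q) (a : σ) (π : List (Set Q)) : Set Q :=
  {q | ∃ L : Set (List Q), (a, L, q) ∈ A.rules ∧ (L ∩ wordsOf π).Nonempty}

/-- The macrostate `P_t = {q | t →A q}` of a tree `t`. -/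
def Pt {σ Q : Type} (A : HedgeAutomaton σ Q) (t : UTree σ) : Set Q := {q | HEval A t q}

/-- The macrostate word `π_h = P_{t₁}⋯P_{tₙ}` of a hedge `h = t₁⋯tₙ`. -/
def pih {σ Q : Type} (A : HedgeAutomaton σ Q) (h : List (UTree σ)) : List (Set Q) :=
  h.map (Pt A)

/-- Chains: `chainFrom s s' l` holds iff `l = (s,q₁)(q₁,q₂)⋯(qₙ,s')` for some `n ≥ 0`,
or `l = ε` and `s = s'`.  Thus `{l | chainFrom s s' l}` is the language `L_{s,s'}`. -/
def chainFrom {Q : Type} : Q → Q → List (Q × Q) → Prop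
  | s, s', [] => s = s'
  | s, s', p :: l => p.1 = s ∧ chainFrom p.2 s' l

/-- The hedge automaton `A_H` constructed from the VPA `A`: states `Q × Q`, final
states `Q_i × Q_f`, and a rule `(a, L_{s,s'}, (q,q'))` for every `γ ∈ Γ` with
`q –a:γ→ s ∈ Δ` and `s' –ā:γ→ q' ∈ Δ`. -/
def VPAtoHedge {σ Q Γ : Type} (A : VPA σ Q Γ) : HedgeAutomaton σ (Q × Q) where
  final := A.init ×ˢ A.final
  rules := {r | ∃ (a : σ) (γ : Γ) (q q' s s' : Q),
      A.push q a γ s ∧ A.pop s' a γ q' ∧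
      r = (a, {l : List (Q × Q) | chainFrom s s' l}, (q, q'))}

/-!
The state `(q, q')` of `A_H` summarises a tree `t` by the pairs of states between which `A`
can read `[t]`. Since `[t]` is well nested, every run of `A` on it returns to the stack it
started from, so such a run is independent of the stack. A run on `a[t₁]⋯[tₙ]ā` therefore
pushes some `γ` on `a` while moving from `q` to `s`, reads each `[tᵢ]` between consecutive
states `qᵢ₋₁ → qᵢ` with `q₀ = s`, `qₙ = s'`, and pops `γ` on `ā` from `s'` to `q'`: this is
exactly a rule `(a, L_{s,s'}, (q, q'))` applied to the children's summaries
`(s,q₁)(q₁,q₂)⋯(qₙ₋₁,s')`.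
-/

section

variable {σ Q Γ : Type}

@[elab_as_elim]
theorem UTree.induction_mem {P : UTree σ → Prop}
    (node : ∀ a ts, (∀ t ∈ ts, P t) → P (.node a ts)) : ∀ t, P t
  | .node a ts => node a ts fun t _ => UTree.induction_mem node t
termination_by t => t
decreasing_by simp only [UTree.node.sizeOf_spec]; have := List.sizeOf_lt_of_mem ‹t ∈ ts›; omega

theorem UTree.lin_node (a : σ) (ts : List (UTree σ)) :
    (UTree.node a ts).lin = Sum.inl a :: (linH ts ++ [Sum.inr a]) := by
  rw [UTree.lin]
  simp [linH]

theorem linH_nil : linH ([] : List (UTree σ)) = [] := rfl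

theorem linH_cons (t : UTree σ) (ts : List (UTree σ)) :
    linH (t :: ts) = t.lin ++ linH ts := by
  simp [linH]

theorem chainFrom_nil_iff {s s' : Q} : chainFrom s s' [] ↔ s = s' := Iff.rfl

theorem chainFrom_cons_iff {s s' : Q} {p : Q × Q} {l : List (Q × Q)} :
    chainFrom s s' (p :: l) ↔ p.1 = s ∧ chainFrom p.2 s' l := Iff.rfl

theorem HEval.node_iff {A : HedgeAutomaton σ Q} {a : σ} {ts : List (UTree σ)} {q : Q} :
    HEval A (UTree.node a ts) q ↔
      ∃ L, (a, L, q) ∈ A.rules ∧ ∃ qs ∈ L, List.Forall₂ (HEval A) ts qs := by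
  constructor
  · rintro ⟨hrule, hqs, hlen, hzip⟩
    exact ⟨_, hrule, _, hqs, List.forall₂_iff_zip.mpr ⟨hlen.symm, fun h => hzip _ h⟩⟩
  · rintro ⟨L, hrule, qs, hqs, hF⟩
    obtain ⟨hlen, hzip⟩ := List.forall₂_iff_zip.mp hF
    exact HEval.node hrule hqs hlen.symm fun p hp => hzip hp

namespace VPA

variable (A : VPA σ Q Γ)

theorem steps_nil_iff {c c' : Q × List Γ} : A.Steps c [] c' ↔ c = c' := Iff.rfl

theorem steps_cons_iff {c c'' : Q × List Γ} {x : σ ⊕ σ} {w : List (σ ⊕ σ)} :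
    A.Steps c (x :: w) c'' ↔ ∃ c', A.Step c x c' ∧ A.Steps c' w c'' := Iff.rfl

theorem steps_append_iff (u v : List (σ ⊕ σ)) {c c'' : Q × List Γ} :
    A.Steps c (u ++ v) c'' ↔ ∃ c', A.Steps c u c' ∧ A.Steps c' v c'' := by
  induction u generalizing c with
  | nil => simp [steps_nil_iff]
  | cons x u ih => simp only [List.cons_append, steps_cons_iff, ih]; grind

theorem steps_linH_iff {R : UTree σ → Q × Q → Prop} {ts : List (UTree σ)}
    (hts : ∀ t ∈ ts, ∀ q st q' st',
      A.Steps (q, st) t.lin (q', st') ↔ st' = st ∧ R t (q, q'))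
    {q q' : Q} {st st' : List Γ} :
    A.Steps (q, st) (linH ts) (q', st') ↔
      st' = st ∧ ∃ qs, chainFrom q q' qs ∧ List.Forall₂ R ts qs := by
  induction ts generalizing q st with
  | nil =>
    simp only [linH_nil, steps_nil_iff, List.forall₂_nil_left_iff, exists_eq_right,
      chainFrom_nil_iff, Prod.mk.injEq]
    tauto
  | cons t ts ih =>
    simp only [linH_cons, steps_append_iff, Prod.exists, List.forall₂_cons_left_iff,
      hts t List.mem_cons_self, ih fun t' ht' => hts t' (List.mem_cons_of_mem t ht')]
    constructor
    · rintro ⟨m, stm, ⟨rfl, hR⟩, rfl, qs, hchain, hF⟩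
      exact ⟨rfl, _, chainFrom_cons_iff.mpr ⟨rfl, hchain⟩, q, m, qs, hR, hF, rfl⟩
    · rintro ⟨rfl, _, hchain, q₀, m, qs, hR, hF, rfl⟩
      obtain ⟨rfl, hchain'⟩ := chainFrom_cons_iff.mp hchain
      exact ⟨m, st', ⟨rfl, hR⟩, rfl, qs, hchain', hF⟩

end VPA

theorem heval_vpaToHedge_node_iff {A : VPA σ Q Γ} {a : σ} {ts : List (UTree σ)} {q q' : Q} :
    HEval (VPAtoHedge A) (UTree.node a ts) (q, q') ↔
      ∃ γ s s', A.push q a γ s ∧ A.pop s' a γ q' ∧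
        ∃ qs, chainFrom s s' qs ∧ List.Forall₂ (HEval (VPAtoHedge A)) ts qs := by
  rw [HEval.node_iff]
  constructor
  · rintro ⟨L, ⟨a', γ, q₀, q₀', s, s', hpush, hpop, hrule⟩, qs, hqs, hF⟩
    simp only [Prod.mk.injEq] at hrule
    obtain ⟨rfl, rfl, rfl, rfl⟩ := hrule
    exact ⟨γ, s, s', hpush, hpop, qs, hqs, hF⟩
  · rintro ⟨γ, s, s', hpush, hpop, qs, hqs, hF⟩
    exact ⟨_, ⟨a, γ, q, q', s, s', hpush, hpop, rfl⟩, qs, hqs, hF⟩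

theorem VPA.steps_lin_iff (A : VPA σ Q Γ) (t : UTree σ) {q q' : Q} {st st' : List Γ} :
    A.Steps (q, st) t.lin (q', st') ↔ st' = st ∧ HEval (VPAtoHedge A) t (q, q') := by
  induction t using UTree.induction_mem generalizing q q' st st' with
  | node a ts ih =>
    simp only [UTree.lin_node, steps_cons_iff, steps_append_iff, steps_nil_iff, Step,
      Prod.mk.injEq, Prod.exists, steps_linH_iff A fun t ht _ _ _ _ => ih t ht,
      heval_vpaToHedge_node_iff]
    constructor
    · rintro ⟨s, _, ⟨γ, hpush, rfl⟩, s', _, ⟨rfl, hqs⟩, _, _, ⟨γ', hpop, hstack⟩, rfl, rfl⟩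
      obtain ⟨rfl, rfl⟩ := List.cons_eq_cons.mp hstack
      exact ⟨rfl, γ, s, s', hpush, hpop, hqs⟩
    · rintro ⟨rfl, γ, s, s', hpush, hpop, hqs⟩
      exact ⟨s, _, ⟨γ, hpush, rfl⟩, s', _, ⟨rfl, hqs⟩, q', st', ⟨γ, hpop, rfl⟩, rfl, rfl⟩

end

theorem vpa_to_hedge_correct_general {σ Q Γ : Type}
    (A : VPA σ Q Γ) (t : UTree σ) :
    A.AcceptsWord t.lin ↔ accepted (VPAtoHedge A) t := by
  simp only [VPA.AcceptsWord, accepted, A.steps_lin_iff, true_and, Prod.exists]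
  simp [VPAtoHedge, and_assoc]

/-- Theorem 1: for every VPA `A`, the constructed hedge automaton
`A_H = VPAtoHedge A` satisfies: for all unranked trees `t`, the linearization `[t]`
is accepted by `A` iff `t` is accepted by `A_H`. -/
theorem vpa_to_hedge_correct {σ Q Γ : Type} [Fintype σ] [Fintype Q] [Fintype Γ]
    (A : VPA σ Q Γ) (t : UTree σ) :
    A.AcceptsWord t.lin ↔ accepted (VPAtoHedge A) t :=
  vpa_to_hedge_correct_general A t
end

section
/- A hedge automaton A = (Q, Σ, Q_f, Δ) is universal if and only if for every macrostate P ∈ Post*(∅) we have P ∩ Q_f ≠ ∅. -/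
/-- `Post(M) = {Post_a(π) | a ∈ Σ, π ∈ M*} ∪ M`. -/
def postSet {σ Q : Type} (A : HedgeAutomaton σ Q) (M : Set (Set Q)) : Set (Set Q) :=
  {P | ∃ (a : σ) (π : List (Set Q)), (∀ x ∈ π, x ∈ M) ∧ P = postA A a π} ∪ M

/-- `Post^i(M)`: the `i`-fold iteration of `Post`, with `Post^0(M) = M`. -/
def postIter {σ Q : Type} (A : HedgeAutomaton σ Q) : ℕ → Set (Set Q) → Set (Set Q)
  | 0, M => M
  | n + 1, M => postSet A (postIter A n M)

/-- `Post*(M) = ⋃_{i ≥ 0} Post^i(M)`. -/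
def postStar {σ Q : Type} (A : HedgeAutomaton σ Q) (M : Set (Set Q)) : Set (Set Q) :=
  ⋃ i : ℕ, postIter A i M

/-- `A` is universal: it accepts every tree of `T(Σ)`. -/
def universal {σ Q : Type} (A : HedgeAutomaton σ Q) : Prop :=
  ∀ t : UTree σ, accepted A t

/-!
Writing `P_t` for the set of states reachable at the root of a tree `t`, the macrostate of
`a(t₁ ⋯ tₙ)` is `Post_a(P_{t₁} ⋯ P_{tₙ})`. By induction on trees every `P_t` lies in `Post*(∅)`,
and conversely the set of all `P_t` is closed under `Post`, so `Post*(∅) = {P_t | t ∈ T(Σ)}`.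
A tree `t` is accepted iff `P_t` meets the final states.
-/

namespace HedgeAutomaton

variable {σ Q : Type} (A : HedgeAutomaton σ Q)

theorem hEval_node_iff {a : σ} {ts : List (UTree σ)} {q : Q} :
    HEval A (.node a ts) q ↔
      ∃ L qs, (a, L, q) ∈ A.rules ∧ qs ∈ L ∧ List.Forall₂ (HEval A) ts qs := by
  simp only [List.forall₂_iff_zip]
  constructor
  · rintro ⟨hr, hL, hlen, hch⟩
    exact ⟨_, _, hr, hL, hlen.symm, fun hp => hch _ hp⟩
  · rintro ⟨L, qs, hr, hL, hlen, hch⟩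
    exact .node hr hL hlen.symm fun p hp => hch hp

theorem mem_wordsOf_pih {ts : List (UTree σ)} {qs : List Q} :
    qs ∈ wordsOf (pih A ts) ↔ List.Forall₂ (HEval A) ts qs := by
  rw [wordsOf, Set.mem_ofPred_eq, pih, List.forall₂_map_right_iff]
  exact ⟨List.Forall₂.flip, List.Forall₂.flip⟩

theorem pt_node (a : σ) (ts : List (UTree σ)) :
    Pt A (.node a ts) = postA A a (pih A ts) := by
  ext q
  simp only [Pt, postA, Set.mem_ofPred_eq, hEval_node_iff, Set.Nonempty, Set.mem_inter_iff,
    mem_wordsOf_pih, exists_and_left]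

theorem postIter_monotone (M : Set (Set Q)) : Monotone (postIter A · M) :=
  monotone_nat_of_le_succ fun _ => Set.subset_union_right

theorem postA_mem_postStar {M : Set (Set Q)} (a : σ) {π : List (Set Q)}
    (hπ : ∀ P ∈ π, P ∈ postStar A M) : postA A a π ∈ postStar A M := by
  obtain ⟨n, hn⟩ := (postIter_monotone A M).directed_le.exists_mem_subset_of_finset_subset_biUnion
    (s := π.toFinset) fun P hP => hπ P (List.mem_toFinset.1 hP)
  exact Set.mem_iUnion.2 ⟨n + 1, Or.inl ⟨a, π, fun P hP => hn (List.mem_toFinset.2 hP), rfl⟩⟩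

theorem postStar_subset {M S : Set (Set Q)} (hM : M ⊆ S)
    (hS : ∀ a π, (∀ P ∈ π, P ∈ S) → postA A a π ∈ S) : postStar A M ⊆ S := by
  refine Set.iUnion_subset fun n => ?_
  induction n with
  | zero => exact hM
  | succ n ih =>
    rintro _ (⟨a, π, hπ, rfl⟩ | hP)
    exacts [hS a π fun P hP => ih (hπ P hP), ih hP]

theorem pt_mem_postStar (M : Set (Set Q)) : ∀ t : UTree σ, Pt A t ∈ postStar A M
  | .node a ts => by
    rw [pt_node]
    refine postA_mem_postStar A a fun P hP => ?_
    obtain ⟨t, ht, rfl⟩ := List.mem_map.1 hP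
    have := List.sizeOf_lt_of_mem ht
    exact pt_mem_postStar M t
  decreasing_by simp only [UTree.node.sizeOf_spec]; omega

theorem postStar_empty_eq_range_pt : postStar A ∅ = Set.range (Pt A) := by
  refine (postStar_subset A (Set.empty_subset _) fun a π hπ => ?_).antisymm
    (Set.range_subset_iff.2 (pt_mem_postStar A ∅))
  obtain ⟨ts, rfl⟩ : π ∈ Set.range (List.map (Pt A)) := by
    rw [Set.range_list_map]
    exact hπ
  exact ⟨.node a ts, pt_node A a ts⟩

end HedgeAutomaton

theorem universal_iff_postStar_general {σ Q : Type}
    (A : HedgeAutomaton σ Q) :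
    universal A ↔ ∀ P ∈ postStar A (∅ : Set (Set Q)), P ∩ A.final ≠ ∅ := by
  rw [HedgeAutomaton.postStar_empty_eq_range_pt, Set.forall_mem_range]
  refine forall_congr' fun t => ?_
  rw [← Set.nonempty_iff_ne_empty]
  exact ⟨fun ⟨q, hq, ht⟩ => ⟨q, ht, hq⟩, fun ⟨q, ht, hq⟩ => ⟨q, hq, ht⟩⟩

/-- Proposition 1: `A` is universal iff every macrostate
`P ∈ Post*(∅)` satisfies `P ∩ Q_f ≠ ∅`. -/
theorem universal_iff_postStar {σ Q : Type} [Fintype σ] [Fintype Q]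
    (A : HedgeAutomaton σ Q) (hfin : A.rules.Finite) (hreg : RegularHA A) :
    universal A ↔ ∀ P ∈ postStar A (∅ : Set (Set Q)), P ∩ A.final ≠ ∅ :=
  universal_iff_postStar_general A
end

section
/- Let A be a hedge automaton and M a set of macrostates. Then Post(M) = {Post_a(r) | a ∈ Σ, r ∈ rel(M)*} ∪ M. -/
/-- A hedge automaton whose horizontal languages are given by NFAs: `step` is the
transition relation of the disjoint union `B` of the fixed NFAs `B_L` (with overall
state set `S`), and each rule `(a, I, F, q)` records the initial states `I = I_L`
and final states `F = F_L` of the NFA recognizing its horizontal language in `B`. -/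
structure HedgeAutNFA (σ Q S : Type) where
  final : Set Q
  step : S → Q → Set S
  rules : Set (σ × Set S × Set S × Q)

/-- Paths in the NFA `B` given by `step`. -/
def nfaPath {Q S : Type} (step : S → Q → Set S) : S → List Q → S → Prop
  | s, [], s' => s = s'
  | s, q :: w, s'' => ∃ s', s' ∈ step s q ∧ nfaPath step s' w s''

/-- The horizontal language recognized between initial states `I` and final states `F`. -/
def nfaLang {Q S : Type} (step : S → Q → Set S) (I F : Set S) : Set (List Q) :=
  {w | ∃ s ∈ I, ∃ s' ∈ F, nfaPath step s w s'}

/-- `rel(π)`: the pairs `(s, s')` connected in `B` by a path labeled by some word of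
`words(π)`. -/
def relw {Q S : Type} (step : S → Q → Set S) (π : List (Set Q)) : Set (S × S) :=
  {p | ∃ w ∈ wordsOf π, nfaPath step p.1 w p.2}

/-- Composition of relations in diagrammatic order. -/
def relComp {S : Type} (r₁ r₂ : Set (S × S)) : Set (S × S) :=
  {p | ∃ s', (p.1, s') ∈ r₁ ∧ (s', p.2) ∈ r₂}

/-- The identity relation on `S`. -/
def relId {S : Type} : Set (S × S) := {p | p.1 = p.2}

/-- `R*`: all compositions `r₁ ∘ ⋯ ∘ rₙ` (`n ≥ 0`) of relations of `R`; contains the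
identity relation (case `n = 0`). -/
def starRel {S : Type} (R : Set (Set (S × S))) : Set (Set (S × S)) :=
  {r | ∃ l : List (Set (S × S)), (∀ x ∈ l, x ∈ R) ∧ r = l.foldr relComp relId}

/-- `Post_a(π)` for a macrostate word `π`. -/
def postAw {σ Q S : Type} (A : HedgeAutNFA σ Q S) (a : σ) (π : List (Set Q)) : Set Q :=
  {q | ∃ I F, (a, I, F, q) ∈ A.rules ∧ (nfaLang A.step I F ∩ wordsOf π).Nonempty}

/-- `Post_a(r)` for a relation `r ⊆ S × S`. -/
def postRel {σ Q S : Type} (A : HedgeAutNFA σ Q S) (a : σ) (r : Set (S × S)) : Set Q :=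
  {q | ∃ I F, (a, I, F, q) ∈ A.rules ∧ ∃ p ∈ r, p.1 ∈ I ∧ p.2 ∈ F}

/-- `Post(M) = {Post_a(π) | a ∈ Σ, π ∈ M*} ∪ M`. -/
def postSetN {σ Q S : Type} (A : HedgeAutNFA σ Q S) (M : Set (Set Q)) : Set (Set Q) :=
  {P | ∃ (a : σ) (π : List (Set Q)), (∀ x ∈ π, x ∈ M) ∧ P = postAw A a π} ∪ M

/-!
`Post_a(π)` depends on `π` only through `rel(π)`, since `Post_a(π) = Post_a(rel(π))`. Moreover
`rel` turns concatenation of macrostate words into composition of relations, so the image of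
`M*` under `rel` is exactly `rel(M)*`.
-/

theorem List.exists_map_eq_of_forall_mem_image {α β : Type*} {f : α → β} {M : Set α} :
    ∀ {l : List β}, (∀ x ∈ l, x ∈ f '' M) → ∃ l' : List α, (∀ x ∈ l', x ∈ M) ∧ l'.map f = l
  | [], _ => ⟨[], by simp, rfl⟩
  | y :: l, h => by
    obtain ⟨P, hP, rfl⟩ := h y List.mem_cons_self
    obtain ⟨l', hl', rfl⟩ :=
      exists_map_eq_of_forall_mem_image fun x hx => h x (mem_cons_of_mem _ hx)
    exact ⟨P :: l', forall_mem_cons.2 ⟨hP, hl'⟩, rfl⟩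

section Rel

variable {Q S : Type} (step : S → Q → Set S)

theorem relw_nil : relw step ([] : List (Set Q)) = relId := by
  ext ⟨s, s'⟩
  constructor
  · rintro ⟨_, ⟨⟩, hp⟩
    exact hp
  · exact fun h => ⟨[], .nil, h⟩

theorem relw_cons (P : Set Q) (π : List (Set Q)) :
    relw step (P :: π) = relComp (relw step [P]) (relw step π) := by
  ext ⟨s, s''⟩
  constructor
  · rintro ⟨_, hw, hp⟩
    rcases hw with _ | ⟨hq, hw⟩
    obtain ⟨s', hs', hp⟩ := hp
    exact ⟨s', ⟨[_], .cons hq .nil, s', hs', rfl⟩, _, hw, hp⟩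
  · rintro ⟨s', ⟨_, hw₁, hp₁⟩, w, hw, hp⟩
    rcases hw₁ with _ | ⟨hq, ⟨⟩⟩
    obtain ⟨t, ht, rfl⟩ := hp₁
    exact ⟨_ :: w, .cons hq hw, t, ht, hp⟩

theorem relw_eq_foldr_map (π : List (Set Q)) :
    relw step π = (π.map fun P => relw step [P]).foldr relComp relId := by
  induction π with
  | nil => exact relw_nil step
  | cons P π ih => rw [List.map_cons, List.foldr_cons, relw_cons, ih]

theorem starRel_image_relw_singleton (M : Set (Set Q)) :
    starRel ((fun P => relw step [P]) '' M) = relw step '' {π | ∀ x ∈ π, x ∈ M} := by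
  ext r
  constructor
  · rintro ⟨l, hl, rfl⟩
    obtain ⟨π, hπ, rfl⟩ := List.exists_map_eq_of_forall_mem_image hl
    exact ⟨π, hπ, relw_eq_foldr_map step π⟩
  · rintro ⟨π, hπ, rfl⟩
    exact ⟨_, List.forall_mem_map.2 fun P hP => ⟨P, hπ P hP, rfl⟩, relw_eq_foldr_map step π⟩

end Rel

theorem postAw_eq_postRel_relw {σ Q S : Type} (A : HedgeAutNFA σ Q S) (a : σ)
    (π : List (Set Q)) : postAw A a π = postRel A a (relw A.step π) := by
  ext q
  constructor
  · rintro ⟨I, F, hr, w, ⟨s, hs, s', hs', hp⟩, hw⟩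
    exact ⟨I, F, hr, (s, s'), ⟨w, hw, hp⟩, hs, hs'⟩
  · rintro ⟨I, F, hr, ⟨s, s'⟩, ⟨w, hw, hp⟩, hs, hs'⟩
    exact ⟨I, F, hr, w, ⟨s, hs, s', hs', hp⟩, hw⟩

theorem postSet_eq_via_rel_general {σ Q S : Type}
    (A : HedgeAutNFA σ Q S) (M : Set (Set Q)) :
    postSetN A M =
      {P | ∃ (a : σ) (r : Set (S × S)),
          r ∈ starRel ((fun P => relw A.step [P]) '' M) ∧ P = postRel A a r} ∪ M := by
  ext P
  simp only [postSetN, Set.mem_union, Set.mem_ofPred_eq, starRel_image_relw_singleton]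
  refine or_congr_left ⟨?_, ?_⟩
  · rintro ⟨a, π, hπ, rfl⟩
    exact ⟨a, _, ⟨π, hπ, rfl⟩, postAw_eq_postRel_relw A a π⟩
  · rintro ⟨a, _, ⟨π, hπ, rfl⟩, rfl⟩
    exact ⟨a, π, hπ, (postAw_eq_postRel_relw A a π).symm⟩

/-- Lemma 5: `Post(M) = {Post_a(r) | a ∈ Σ, r ∈ rel(M)*} ∪ M`. -/
theorem postSet_eq_via_rel {σ Q S : Type} [Fintype σ] [Fintype Q] [Fintype S]
    (A : HedgeAutNFA σ Q S) (hfin : A.rules.Finite) (M : Set (Set Q)) :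
    postSetN A M =
      {P | ∃ (a : σ) (r : Set (S × S)),
          r ∈ starRel ((fun P => relw A.step [P]) '' M) ∧ P = postRel A a r} ∪ M :=
  postSet_eq_via_rel_general A M
end

section
/- Let A be a hedge automaton and M a set of macrostates. For every P ∈ Post*(M) there exists P' ∈ MinPost*(M) such that P' ⊆ P. -/
/-- `⌊S⌋`: the `⊆`-minimal elements of a family of sets. -/
def mins {α : Type} (S : Set (Set α)) : Set (Set α) :=
  {P ∈ S | ∀ P' ∈ S, P' ⊆ P → P' = P}

/-- `MinPost^i(M)`, with `MinPost^0(M) = ⌊M⌋` and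
`MinPost^i(M) = ⌊Post(MinPost^{i-1}(M))⌋`. -/
def minPostIter {σ Q : Type} (A : HedgeAutomaton σ Q) : ℕ → Set (Set Q) → Set (Set Q)
  | 0, M => mins M
  | n + 1, M => mins (postSet A (minPostIter A n M))

/-- `MinPost*(M) = ⋃_{i ≥ 0} MinPost^i(M)`. -/
def minPostStar {σ Q : Type} (A : HedgeAutomaton σ Q) (M : Set (Set Q)) : Set (Set Q) :=
  ⋃ i : ℕ, minPostIter A i M

/-!
By induction on `i`, every macrostate of `Post^i(M)` contains one of `MinPost^i(M)`, i.e.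
`postIter A i M ⊆ upperClosure (minPostIter A i M)`. Since
`Post_a` is monotone in each letter of its macrostate word, shrinking every letter of `π` to a
macrostate of `MinPost^i(M)` below it gives a member of `Post(MinPost^i(M))` below `Post_a(π)`;
and as `Q` is finite, every member of a family of macrostates contains a minimal one.
-/

open Set

theorem List.exists_forall₂_of_forall_exists {α β : Type*} {R : α → β → Prop} :
    ∀ {l : List β}, (∀ b ∈ l, ∃ a, R a b) → ∃ l' : List α, List.Forall₂ R l' l
  | [], _ => ⟨[], .nil⟩
  | b :: l, h => by
    obtain ⟨a, hab⟩ := h b List.mem_cons_self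
    obtain ⟨l', hl'⟩ :=
      exists_forall₂_of_forall_exists fun b' hb' => h b' (List.mem_cons_of_mem b hb')
    exact ⟨a :: l', .cons hab hl'⟩

theorem subset_upperClosure_mins {α : Type} [Finite α] (S : Set (Set α)) :
    S ⊆ upperClosure (mins S) := fun P hP => by
  obtain ⟨P', hle, hmin⟩ := Set.isPWO_of_finite.exists_le_minimal hP
  exact ⟨P', ⟨hmin.prop, fun _ h hsub => hmin.eq_of_subset h hsub⟩, hle⟩

theorem wordsOf_mono {Q : Type} {π' π : List (Set Q)} (h : List.Forall₂ (· ⊆ ·) π' π) :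
    wordsOf π' ⊆ wordsOf π := by
  intro w hw
  induction h generalizing w with
  | nil => exact hw
  | cons hsub _ ih =>
    cases hw with
    | cons hmem hw => exact .cons (hsub hmem) (ih hw)

theorem postA_mono {σ Q : Type} (A : HedgeAutomaton σ Q) (a : σ) {π' π : List (Set Q)}
    (h : List.Forall₂ (· ⊆ ·) π' π) : postA A a π' ⊆ postA A a π :=
  fun _ ⟨L, hL, w, hwL, hw⟩ => ⟨L, hL, w, hwL, wordsOf_mono h hw⟩

theorem postSet_subset_upperClosure {σ Q : Type} (A : HedgeAutomaton σ Q)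
    {F G : Set (Set Q)} (h : G ⊆ upperClosure F) :
    postSet A G ⊆ upperClosure (postSet A F) := by
  rintro P (⟨a, π, hπ, rfl⟩ | hP)
  · obtain ⟨π', hπ'⟩ := List.exists_forall₂_of_forall_exists (R := fun x y => x ∈ F ∧ x ⊆ y)
      fun x hx => mem_upperClosure.1 (h (hπ x hx))
    obtain ⟨hmem, hsub⟩ := (List.forall₂_and_left _ _).1 hπ'
    exact ⟨postA A a π', Or.inl ⟨a, π', hmem, rfl⟩, postA_mono A a hsub⟩
  · obtain ⟨P', hP', hsub⟩ := mem_upperClosure.1 (h hP)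
    exact ⟨P', Or.inr hP', hsub⟩

theorem postIter_subset_upperClosure_minPostIter {σ Q : Type} [Finite Q]
    (A : HedgeAutomaton σ Q) (M : Set (Set Q)) :
    ∀ i, postIter A i M ⊆ upperClosure (minPostIter A i M)
  | 0 => subset_upperClosure_mins M
  | i + 1 =>
    (postSet_subset_upperClosure A (postIter_subset_upperClosure_minPostIter A M i)).trans
      (upperClosure_min (subset_upperClosure_mins _) (upperClosure _).upper)

theorem postStar_subset_upperClosure_minPostStar {σ Q : Type} [Finite Q]
    (A : HedgeAutomaton σ Q) (M : Set (Set Q)) :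
    postStar A M ⊆ upperClosure (minPostStar A M) :=
  iUnion_subset fun i => (postIter_subset_upperClosure_minPostIter A M i).trans
    (upperClosure_min ((subset_iUnion (minPostIter A · M) i).trans subset_upperClosure)
      (upperClosure _).upper)

theorem postStar_minPostStar_general {σ Q : Type} [Fintype Q]
    (A : HedgeAutomaton σ Q)
    (M : Set (Set Q)) :
    ∀ P ∈ postStar A M, ∃ P' ∈ minPostStar A M, P' ⊆ P :=
  fun _ hP => mem_upperClosure.1 (postStar_subset_upperClosure_minPostStar A M hP)

/-- Lemma 6: every `P ∈ Post*(M)` contains some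
`P' ∈ MinPost*(M)`. -/
theorem postStar_minPostStar {σ Q : Type} [Fintype σ] [Fintype Q]
    (A : HedgeAutomaton σ Q) (hfin : A.rules.Finite) (hreg : RegularHA A)
    (M : Set (Set Q)) :
    ∀ P ∈ postStar A M, ∃ P' ∈ minPostStar A M, P' ⊆ P :=
  postStar_minPostStar_general A M
end

section
/- Let A = (Q, Σ, Q_f, Δ) be a hedge automaton and a ∈ Σ. Then A is a-universal if and only if X_a = ∅. Moreover, if X_a is nonempty then for every π ∈ X_a, choosing a hedge h ∈ H(Σ) with π = π_h, the word a[h]ā is the linearization of a tree over Σ that is not accepted by A. -/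
/-- `A` is `u`-universal: every tree whose linearization starts with `u` is accepted. -/
def uUniversal {σ Q : Type} (A : HedgeAutomaton σ Q) (u : List (σ ⊕ σ)) : Prop :=
  ∀ t : UTree σ, u <+: t.lin → accepted A t

/-- `E* = {π_h | h ∈ H(Σ)}`. -/
def Estar {σ Q : Type} (A : HedgeAutomaton σ Q) : Set (List (Set Q)) :=
  Set.range (pih A)

/-- `X_a = {π ∈ E* | Post_a(π) ∩ Q_f = ∅}`. -/
def Xa {σ Q : Type} (A : HedgeAutomaton σ Q) (a : σ) : Set (List (Set Q)) :=
  {π ∈ Estar A | postA A a π ∩ A.final = ∅}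


/-! A tree `a(h)` is accepted exactly when `Post_a(π_h)` meets `Q_f`, because the states reachable
at the root of `a(h)` are `Post_a(π_h)`. Every tree whose linearization starts with `a` has the
form `a(h)`, so `A` is `a`-universal iff no `π_h` lies in `X_a`, and for `π_h ∈ X_a` the tree
`a(h)`, whose linearization is `a[h]ā`, is a rejected witness. -/

namespace UTree

variable {σ : Type}

lemma lin_node_s9 (a : σ) (ts : List (UTree σ)) :
    (node a ts).lin = Sum.inl a :: (linH ts ++ [Sum.inr a]) := by
  rw [lin]
  simp [linH]

lemma singleton_prefix_lin_node_iff (a b : σ) (ts : List (UTree σ)) :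
    [Sum.inl a] <+: (node b ts).lin ↔ a = b := by
  simp [lin_node_s9]

end UTree

section HedgeAutomaton

variable {σ Q : Type} (A : HedgeAutomaton σ Q)

lemma mem_wordsOf_pih_iff (ts : List (UTree σ)) (qs : List Q) :
    qs ∈ wordsOf (pih A ts) ↔ List.Forall₂ (fun t q => HEval A t q) ts qs := by
  simp only [wordsOf, pih, Set.mem_ofPred_eq, List.forall₂_map_right_iff]
  exact ⟨List.Forall₂.flip, List.Forall₂.flip⟩

lemma heval_node_iff (a : σ) (ts : List (UTree σ)) (q : Q) :
    HEval A (.node a ts) q ↔ q ∈ postA A a (pih A ts) := by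
  constructor
  · rintro ⟨hrule, hL, hlen, hruns⟩
    exact ⟨_, hrule, _, hL,
      (mem_wordsOf_pih_iff A ts _).2 (List.forall₂_iff_zip.2 ⟨hlen.symm, hruns _⟩)⟩
  · rintro ⟨L, hrule, qs, hL, hqs⟩
    obtain ⟨hlen, hruns⟩ := List.forall₂_iff_zip.1 ((mem_wordsOf_pih_iff A ts qs).1 hqs)
    exact .node hrule hL hlen.symm fun _ hp => hruns hp

lemma not_accepted_node_iff (a : σ) (ts : List (UTree σ)) :
    ¬ accepted A (.node a ts) ↔ pih A ts ∈ Xa A a := by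
  simp [accepted, Xa, Estar, heval_node_iff, Set.eq_empty_iff_forall_notMem, and_comm]

lemma uUniversal_singleton_iff (a : σ) :
    uUniversal A [Sum.inl a] ↔ ∀ ts, accepted A (.node a ts) := by
  refine ⟨fun hu ts => hu _ ((UTree.singleton_prefix_lin_node_iff a a ts).2 rfl), ?_⟩
  rintro hacc ⟨b, ts⟩ hpre
  obtain rfl := (UTree.singleton_prefix_lin_node_iff a b ts).1 hpre
  exact hacc ts

lemma Xa_eq_empty_iff (a : σ) : Xa A a = ∅ ↔ ∀ ts, accepted A (.node a ts) := by
  rw [Set.eq_empty_iff_forall_notMem]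
  constructor
  · intro hX ts
    by_contra hrej
    exact hX _ ((not_accepted_node_iff A a ts).1 hrej)
  · rintro hacc π hπ
    obtain ⟨ts, rfl⟩ := hπ.1
    exact (not_accepted_node_iff A a ts).2 hπ (hacc ts)

end HedgeAutomaton

theorem a_universal_iff_Xa_general {σ Q : Type}
    (A : HedgeAutomaton σ Q) (a : σ) :
    (uUniversal A [Sum.inl a] ↔ Xa A a = ∅) ∧
    (∀ π ∈ Xa A a, ∀ h : List (UTree σ), π = pih A h →
      ∃ t : UTree σ, t.lin = Sum.inl a :: (linH h ++ [Sum.inr a]) ∧ ¬ accepted A t) := by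
  refine ⟨?_, fun π hπ h hπh => ⟨.node a h, UTree.lin_node_s9 a h, ?_⟩⟩
  · rw [uUniversal_singleton_iff, Xa_eq_empty_iff]
  · exact (not_accepted_node_iff A a h).2 (hπh ▸ hπ)

/-- Proposition 3: `A` is `a`-universal iff `X_a = ∅`; moreover for
every `π ∈ X_a` and every hedge `h` with `π = π_h`, the word `a[h]ā` is the
linearization of a tree not accepted by `A`. -/
theorem a_universal_iff_Xa {σ Q : Type} [Fintype σ] [Fintype Q]
    (A : HedgeAutomaton σ Q) (hfin : A.rules.Finite) (hreg : RegularHA A) (a : σ) :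
    (uUniversal A [Sum.inl a] ↔ Xa A a = ∅) ∧
    (∀ π ∈ Xa A a, ∀ h : List (UTree σ), π = pih A h →
      ∃ t : UTree σ, t.lin = Sum.inl a :: (linH h ++ [Sum.inr a]) ∧ ¬ accepted A t) :=
  a_universal_iff_Xa_general A a
end

section
/- Let A be a VPA over Σ and u a nonempty proper prefix of the linearization of some tree. Then ⌊Safe(u)⌋ and ⌊LSafe(u)⌋ are finite, and every set of configurations they contain is finite; in fact every C ∈ ⌊Safe(u)⌋ (and every C ∈ ⌊LSafe(u)⌋) satisfies C ⊆ Q × Γ^k where k is the number of unmatched open letters of u. -/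
/-- `Safe A u`: the sets of configurations that are safe for `u`. -/
def Safe {σ Q Γ : Type} (A : VPA σ Q Γ) (u : List (σ ⊕ σ)) :
    Set (Set (Q × List Γ)) :=
  {C | ∀ v : List (σ ⊕ σ), (∃ t : UTree σ, u ++ v = t.lin) →
        ∃ c ∈ C, ∃ p ∈ A.final, A.Steps c v (p, [])}

/-- `LSafe A u`: the sets of configurations that are leaf-safe for `u`
(only continuations starting with a closing tag are considered). -/
def LSafe {σ Q Γ : Type} (A : VPA σ Q Γ) (u : List (σ ⊕ σ)) :
    Set (Set (Q × List Γ)) :=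
  {C | ∀ (b : σ) (v' : List (σ ⊕ σ)), (∃ t : UTree σ, u ++ (Sum.inr b :: v') = t.lin) →
        ∃ c ∈ C, ∃ p ∈ A.final, A.Steps c (Sum.inr b :: v') (p, [])}

/-- `A` is `u`-universal: every tree whose linearization starts with `u` is accepted. -/
def uUniversalV {σ Q Γ : Type} (A : VPA σ Q Γ) (u : List (σ ⊕ σ)) : Prop :=
  ∀ t : UTree σ, u <+: t.lin → A.AcceptsTree t

/-! A run of a VPA changes the stack height by the balance (opening minus closing tags) of the
word it reads. A tree linearization is balanced and `u = a₁[h₁]⋯a_k[h_k]` has balance `k`, so a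
configuration from which a continuation of `u` is read down to the empty stack has a stack of
height exactly `k`. Restricting a (leaf-)safe set to such configurations keeps it (leaf-)safe,
so the minimal ones live inside the finite set `Q × Γ^k`. -/

def balance {σ : Type} (w : List (σ ⊕ σ)) : ℤ :=
  (w.map (Sum.elim (fun _ => 1) fun _ => -1)).sum

section Balance

variable {σ : Type}

@[simp]
lemma balance_nil : balance ([] : List (σ ⊕ σ)) = 0 := rfl

@[simp]
lemma balance_cons_inl (a : σ) (w : List (σ ⊕ σ)) :
    balance (Sum.inl a :: w) = 1 + balance w := by
  simp [balance]

@[simp]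
lemma balance_cons_inr (a : σ) (w : List (σ ⊕ σ)) :
    balance (Sum.inr a :: w) = -1 + balance w := by
  simp [balance]

@[simp]
lemma balance_append (v w : List (σ ⊕ σ)) : balance (v ++ w) = balance v + balance w := by
  simp [balance]

lemma balance_flatten_eq_zero {L : List (List (σ ⊕ σ))} (h : ∀ w ∈ L, balance w = 0) :
    balance L.flatten = 0 := by
  induction L with
  | nil => rfl
  | cons w L ih => simp [h w (by simp), ih fun v hv => h v (by simp [hv])]

@[simp]
lemma UTree.balance_lin : ∀ t : UTree σ, balance t.lin = 0
  | .node a ts => by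
    have hts : balance (ts.attach.map fun x => x.1.lin).flatten = 0 :=
      balance_flatten_eq_zero <| by
        simp only [List.mem_map, List.mem_attach, true_and, forall_exists_index]
        rintro _ x rfl
        exact balance_lin x.1
    rw [UTree.lin, balance_cons_inl, balance_append, hts]
    simp
decreasing_by simp only [UTree.node.sizeOf_spec]; have := List.sizeOf_lt_of_mem x.2; omega

@[simp]
lemma balance_linH (h : List (UTree σ)) : balance (linH h) = 0 :=
  balance_flatten_eq_zero <| by simp

lemma balance_flatten_inl_cons_linH (l : List (σ × List (UTree σ))) :
    balance (l.map fun p => Sum.inl p.1 :: linH p.2).flatten = l.length := by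
  induction l with
  | nil => rfl
  | cons p l ih => simp [ih, add_comm]

end Balance

namespace VPA

variable {σ Q Γ : Type} (A : VPA σ Q Γ)

lemma Steps.length_stack {v : List (σ ⊕ σ)} {c c' : Q × List Γ} (h : A.Steps c v c') :
    (c'.2.length : ℤ) = c.2.length + balance v := by
  induction v generalizing c with
  | nil => cases h; simp
  | cons x w ih =>
    obtain ⟨d, hstep, hrest⟩ := h
    rw [ih hrest]
    cases x with
    | inl a => obtain ⟨γ, -, hd⟩ := hstep; simp [hd, add_assoc]
    | inr a => obtain ⟨γ, -, hd⟩ := hstep; simp [hd]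

lemma length_stack_eq_balance {u v : List (σ ⊕ σ)} (hv : ∃ t : UTree σ, u ++ v = t.lin)
    {c : Q × List Γ} {p : Q} (hs : A.Steps c v (p, [])) : (c.2.length : ℤ) = balance u := by
  obtain ⟨t, ht⟩ := hv
  have hbalance : balance u + balance v = 0 := by rw [← balance_append, ht, UTree.balance_lin]
  have := Steps.length_stack A hs
  simp only [List.length_nil, Nat.cast_zero] at this
  omega

end VPA

section Minimal

variable {α : Type} {S : Set (Set α)} {T : Set α}

lemma subset_of_mem_mins (hS : ∀ C ∈ S, C ∩ T ∈ S) {C : Set α} (hC : C ∈ mins S) : C ⊆ T := by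
  rw [← hC.2 (C ∩ T) (hS C hC.1) Set.inter_subset_left]
  exact Set.inter_subset_right

lemma mins_finite_and_finite_of_inter_mem (hT : T.Finite) (hS : ∀ C ∈ S, C ∩ T ∈ S) :
    (mins S).Finite ∧ ∀ C ∈ mins S, C.Finite ∧ C ⊆ T :=
  ⟨hT.finite_subsets.subset fun _ hC => subset_of_mem_mins hS hC,
    fun _ hC => ⟨hT.subset (subset_of_mem_mins hS hC), subset_of_mem_mins hS hC⟩⟩

end Minimal

section SafeSets

variable {σ Q Γ : Type} (A : VPA σ Q Γ) {u : List (σ ⊕ σ)} {k : ℕ}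

lemma inter_length_stack_mem_safe (hk : balance u = k) :
    ∀ C ∈ Safe A u, C ∩ {c : Q × List Γ | c.2.length = k} ∈ Safe A u := by
  intro C hC v hv
  obtain ⟨c, hc, p, hp, hs⟩ := hC v hv
  exact ⟨c, ⟨hc, by exact_mod_cast (A.length_stack_eq_balance hv hs).trans hk⟩, p, hp, hs⟩

lemma inter_length_stack_mem_lSafe (hk : balance u = k) :
    ∀ C ∈ LSafe A u, C ∩ {c : Q × List Γ | c.2.length = k} ∈ LSafe A u := by
  intro C hC b v hv
  obtain ⟨c, hc, p, hp, hs⟩ := hC b v hv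
  exact ⟨c, ⟨hc, by exact_mod_cast (A.length_stack_eq_balance hv hs).trans hk⟩, p, hp, hs⟩

end SafeSets

theorem mins_safe_finite_general {σ Q Γ : Type} [Fintype Q] [Fintype Γ]
    (A : VPA σ Q Γ) (u : List (σ ⊕ σ)) (k : ℕ)
    (l : List (σ × List (UTree σ)))
    (hfac : u = (l.map fun p => Sum.inl p.1 :: linH p.2).flatten)
    (hk : k = l.length) :
    (mins (Safe A u)).Finite ∧ (mins (LSafe A u)).Finite ∧
    (∀ C ∈ mins (Safe A u),
      C.Finite ∧ C ⊆ {c : Q × List Γ | c.2.length = k}) ∧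
    (∀ C ∈ mins (LSafe A u),
      C.Finite ∧ C ⊆ {c : Q × List Γ | c.2.length = k}) := by
  have hbalance : balance u = k := by rw [hfac, balance_flatten_inl_cons_linH, hk]
  have hfin : {c : Q × List Γ | c.2.length = k}.Finite :=
    (Set.finite_univ.prod (List.finite_length_eq Γ k)).subset fun _ hc => ⟨trivial, hc⟩
  obtain ⟨hSafe, hSafe'⟩ :=
    mins_finite_and_finite_of_inter_mem hfin (inter_length_stack_mem_safe A hbalance)
  obtain ⟨hLSafe, hLSafe'⟩ :=
    mins_finite_and_finite_of_inter_mem hfin (inter_length_stack_mem_lSafe A hbalance)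
  exact ⟨hSafe, hLSafe, hSafe', hLSafe'⟩

/-- Proposition 7: for `u` a nonempty proper prefix of some
linearization, factorized as `u = a₁[h₁]⋯a_k[h_k]` (so `k` is the number of
unmatched open letters of `u`), the antichains `⌊Safe(u)⌋` and `⌊LSafe(u)⌋` are
finite, all their elements are finite sets of configurations, and every such
element is included in `Q × Γ^k`. -/
theorem mins_safe_finite {σ Q Γ : Type} [Fintype σ] [Fintype Q] [Fintype Γ]
    (A : VPA σ Q Γ) (u : List (σ ⊕ σ)) (k : ℕ)
    (l : List (σ × List (UTree σ)))
    (hfac : u = (l.map fun p => Sum.inl p.1 :: linH p.2).flatten)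
    (hk : k = l.length)
    (hu : u ≠ []) (hpre : ProperPrefix u) :
    (mins (Safe A u)).Finite ∧ (mins (LSafe A u)).Finite ∧
    (∀ C ∈ mins (Safe A u),
      C.Finite ∧ C ⊆ {c : Q × List Γ | c.2.length = k}) ∧
    (∀ C ∈ mins (LSafe A u),
      C.Finite ∧ C ⊆ {c : Q × List Γ | c.2.length = k}) :=
  mins_safe_finite_general A u k l hfac hk
end
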